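/- Let N ≥ 2 and let Q be a real N×N orthogonal matrix. Then there exists a nonzero vector v ∈ ℝ^N such that H(v) Q has block form [[1, 0ᵀ], [0, Q′]], where the first row and first column of H(v) Q equal the first standard basis vector, and Q′ is an (N−1)×(N−1) orthogonal matrix with det Q′ = −det Q. -/

import Mathlib

/-!
Reflect the first column `q` of `Q` onto `e₀`: `v = q - e₀` works when `q ≠ e₀` because `q` and
`e₀` are unit vectors, and any nonzero `v ⟂ e₀` works when `q = e₀`. Then `M = H(v) Q` is
orthogonal with first column `e₀`, so orthonormality of the columns forces its first row to be
`e₀` as well and its lower-right block to be orthogonal; expanding `det M` along the first column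
and `det H(v) = -1` give `det Q' = -det Q`.
-/

open scoped BigOperators Matrix

/-- The Householder reflection `H(v) = I - 2 v vᵀ / ‖v‖₂²`. -/
noncomputable def householder {N : ℕ} (v : Fin N → ℝ) : Matrix (Fin N) (Fin N) ℝ :=
  (1 : Matrix (Fin N) (Fin N) ℝ) - (2 / ∑ k, v k ^ 2) • Matrix.vecMulVec v v

open Matrix

section Householder

variable {N : ℕ}

theorem householder_eq (v : Fin N → ℝ) :
    householder v = 1 - vecMulVec ((2 / (v ⬝ᵥ v)) • v) v := by
  rw [householder, ← smul_vecMulVec]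
  simp only [dotProduct, sq]

theorem householder_transpose (v : Fin N → ℝ) : (householder v)ᵀ = householder v := by
  rw [householder, transpose_sub, transpose_one, transpose_smul, transpose_vecMulVec]

theorem householder_mulVec (v x : Fin N → ℝ) :
    householder v *ᵥ x = x - (2 * (v ⬝ᵥ x) / (v ⬝ᵥ v)) • v := by
  rw [householder_eq, sub_mulVec, one_mulVec, vecMulVec_mulVec, op_smul_eq_smul, smul_smul]
  ring_nf

theorem householder_mul_self {v : Fin N → ℝ} (hv : v ≠ 0) :
    householder v * householder v = 1 := by
  have hvv : v ⬝ᵥ v ≠ 0 := mt dotProduct_self_eq_zero.mp hv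
  have h : v ⬝ᵥ (2 / (v ⬝ᵥ v)) • v = 2 := by
    rw [dotProduct_smul, smul_eq_mul, div_mul_cancel₀ _ hvv]
  rw [householder_eq, sub_mul, mul_sub, mul_sub, vecMulVec_mul_vecMulVec, one_mul, mul_one,
    one_mul, h, vecMulVec_smul, two_smul]
  abel

theorem householder_det {v : Fin N → ℝ} (hv : v ≠ 0) : (householder v).det = -1 := by
  have hvv : v ⬝ᵥ v ≠ 0 := mt dotProduct_self_eq_zero.mp hv
  rw [householder_eq, sub_eq_add_neg, ← neg_vecMulVec, vecMulVec_eq Unit,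
    det_one_add_replicateCol_mul_replicateRow, dotProduct_neg, dotProduct_smul, smul_eq_mul,
    div_mul_cancel₀ _ hvv]
  norm_num

theorem householder_mulVec_of_dotProduct_eq_zero {v x : Fin N → ℝ} (h : v ⬝ᵥ x = 0) :
    householder v *ᵥ x = x := by
  simp [householder_mulVec, h]

theorem householder_sub_mulVec {x y : Fin N → ℝ} (hxy : x ≠ y) (hnorm : x ⬝ᵥ x = y ⬝ᵥ y) :
    householder (x - y) *ᵥ x = y := by
  have hvv : (x - y) ⬝ᵥ (x - y) ≠ 0 := mt dotProduct_self_eq_zero.mp (sub_ne_zero.mpr hxy)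
  have hvv' : (x - y) ⬝ᵥ (x - y) = 2 * ((x - y) ⬝ᵥ x) := by
    simp only [sub_dotProduct, dotProduct_sub, dotProduct_comm y x, hnorm]
    ring
  rw [householder_mulVec, ← hvv', div_self hvv, one_smul, sub_sub_cancel]

theorem exists_householder_mulVec_eq_single {i j : Fin N} (hij : i ≠ j) {x : Fin N → ℝ}
    (hx : x ⬝ᵥ x = 1) : ∃ v ≠ 0, householder v *ᵥ x = Pi.single i 1 := by
  by_cases hxi : x = Pi.single i 1
  · refine ⟨Pi.single j 1, by simp, ?_⟩
    rw [householder_mulVec_of_dotProduct_eq_zero, hxi]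
    simp [hxi, hij]
  · exact ⟨x - Pi.single i 1, sub_ne_zero.mpr hxi, householder_sub_mulVec hxi (by simp [hx])⟩

end Householder

namespace Matrix

variable {R : Type*} [CommRing R] {n : ℕ} {M : Matrix (Fin (n + 1)) (Fin (n + 1)) R}

theorem row_zero_eq_single_of_transpose_mul_self_eq_one (hM : Mᵀ * M = 1)
    (hcol : Mᵀ 0 = Pi.single 0 1) : M 0 = Pi.single 0 1 := by
  funext j
  have h := congrFun (congrFun hM 0) j
  rwa [mul_apply', hcol, single_one_dotProduct, one_eq_pi_single] at h

theorem submatrix_succ_transpose_mul_self_eq_one (hM : Mᵀ * M = 1)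
    (hrow : M 0 = Pi.single 0 1) :
    (M.submatrix Fin.succ Fin.succ)ᵀ * M.submatrix Fin.succ Fin.succ = 1 := by
  ext i j
  have h := congrFun (congrFun hM i.succ) j.succ
  simp only [mul_apply, Fin.sum_univ_succ, transpose_apply, hrow, one_apply, Fin.succ_inj] at h
  simpa [mul_apply, one_apply, Fin.succ_ne_zero] using h

theorem det_submatrix_succ_of_col_zero_eq_single (hcol : Mᵀ 0 = Pi.single 0 1) :
    (M.submatrix Fin.succ Fin.succ).det = M.det := by
  have hcol' (i : Fin (n + 1)) : M i 0 = (Pi.single 0 1 : Fin (n + 1) → R) i := congrFun hcol i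
  rw [det_succ_column_zero, Fintype.sum_eq_single 0 fun i hi => by simp [hcol', hi]]
  simp [hcol']

end Matrix

/-- For `N ≥ 2` and `Q` orthogonal, there is a nonzero `v ∈ ℝᴺ` such that `H(v) Q` has the
block form `[[1, 0ᵀ], [0, Q′]]` with `Q′` an `(N−1) × (N−1)` orthogonal matrix satisfying
`det Q′ = −det Q`. -/
theorem householder_reduce_first_column {N : ℕ} (hN : 2 ≤ N)
    (Q : Matrix (Fin N) (Fin N) ℝ) (hQ : Qᵀ * Q = 1) :
    ∃ (v : Fin N → ℝ) (Q' : Matrix (Fin (N - 1)) (Fin (N - 1)) ℝ), v ≠ 0 ∧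
      (householder v * Q) ⟨0, by omega⟩ ⟨0, by omega⟩ = 1 ∧
      (∀ j : Fin (N - 1),
        (householder v * Q) ⟨0, by omega⟩ ⟨(j : ℕ) + 1, by omega⟩ = 0 ∧
        (householder v * Q) ⟨(j : ℕ) + 1, by omega⟩ ⟨0, by omega⟩ = 0) ∧
      (∀ i j : Fin (N - 1),
        (householder v * Q) ⟨(i : ℕ) + 1, by omega⟩ ⟨(j : ℕ) + 1, by omega⟩ = Q' i j) ∧
      Q'ᵀ * Q' = 1 ∧ Q'.det = -Q.det := by
  obtain ⟨n, rfl⟩ : ∃ n, N = n + 1 := ⟨N - 1, by omega⟩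
  have hx : Qᵀ 0 ⬝ᵥ Qᵀ 0 = 1 := by
    have h := congrFun (congrFun hQ 0) 0
    rwa [mul_apply', one_apply_eq] at h
  obtain ⟨v, hv, hHx⟩ := exists_householder_mulVec_eq_single
    (i := 0) (j := ⟨1, by omega⟩) (Fin.ne_of_val_ne zero_ne_one) hx
  set M := householder v * Q
  have hcol : Mᵀ 0 = Pi.single 0 1 := hHx
  have hM : Mᵀ * M = 1 := by
    rw [transpose_mul, householder_transpose, mul_assoc, ← mul_assoc (householder v),
      householder_mul_self hv, one_mul, hQ]
  have hrow := row_zero_eq_single_of_transpose_mul_self_eq_one hM hcol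
  refine ⟨v, M.submatrix Fin.succ Fin.succ, hv, by simpa using congrFun hcol 0,
    fun j => ⟨?_, ?_⟩, fun i j => rfl, submatrix_succ_transpose_mul_self_eq_one hM hrow, ?_⟩
  · exact (congrFun hrow j.succ).trans (Pi.single_eq_of_ne (Fin.succ_ne_zero j) _)
  · exact (congrFun hcol j.succ).trans (Pi.single_eq_of_ne (Fin.succ_ne_zero j) _)
  · rw [det_submatrix_succ_of_col_zero_eq_single hcol, det_mul, householder_det hv, neg_one_mul]
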